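/- arXiv:2310.14738 — 2 statements merged into one kernel-verified Lean document; each statement's English description precedes it below -/
import Mathlib

section
/- If curves satisfy the Navier boundary conditions k(y)=0 and (-2∂_s k(y) ν(y) + μ τ(y))_1 = 0 at y ∈ {0,1}, with endpoints constrained to the x-axis so that (∂_t γ)(y)_2 = 0, and the velocity is ∂_t γ = V ν + Λ τ with V = -2∂_s²k - k³ + μk, then at each boundary point y one has -2 ∂_s k(y) V(y) + μ Λ(y) = 0. -/
open Real MeasureTheory Filter

noncomputable section

abbrev Vec := ℝ × ℝ

/-- Counterclockwise rotation by `π/2`. -/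
def J (v : Vec) : Vec := (-v.2, v.1)

/-- Euclidean dot product on `ℝ²`. -/
def dot (u v : Vec) : ℝ := u.1 * v.1 + u.2 * v.2

/-- Partial derivative in time of a time-dependent vector field. -/
noncomputable def pt (γ : ℝ → ℝ → Vec) (t x : ℝ) : Vec := deriv (fun s => γ s x) t

/-- Partial derivative in space of a time-dependent vector field. -/
noncomputable def px (γ : ℝ → ℝ → Vec) (t x : ℝ) : Vec := deriv (fun y => γ t y) x

/-- Partial derivative in time of a scalar field. -/
noncomputable def ptR (f : ℝ → ℝ → ℝ) (t x : ℝ) : ℝ := deriv (fun s => f s x) t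

/-- Speed of the parametrization. -/
noncomputable def speed (γ : ℝ → ℝ → Vec) (t x : ℝ) : ℝ := ‖px γ t x‖

/-- Arclength derivative of a vector field along `γ`. -/
noncomputable def dsV (γ : ℝ → ℝ → Vec) (F : ℝ → ℝ → Vec) (t x : ℝ) : Vec :=
  (speed γ t x)⁻¹ • px F t x

/-- Arclength derivative of a scalar field along `γ`. -/
noncomputable def dsR (γ : ℝ → ℝ → Vec) (f : ℝ → ℝ → ℝ) (t x : ℝ) : ℝ :=
  (speed γ t x)⁻¹ * deriv (fun y => f t y) x

/-- Unit tangent vector. -/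
noncomputable def tang (γ : ℝ → ℝ → Vec) : ℝ → ℝ → Vec := dsV γ γ

/-- Unit normal vector (counterclockwise rotation of the tangent). -/
noncomputable def nor (γ : ℝ → ℝ → Vec) (t x : ℝ) : Vec := J (tang γ t x)

/-- Oriented scalar curvature. -/
noncomputable def curv (γ : ℝ → ℝ → Vec) (t x : ℝ) : ℝ :=
  dot (dsV γ (tang γ) t x) (nor γ t x)


/-- with Navier boundary conditions and endpoints constrained to the
`x`-axis, at each boundary point `-2 ∂_s k V + μ Λ = 0`. -/
theorem navier_boundary_velocity_identity
    (γ : ℝ → ℝ → Vec) (V Λ : ℝ → ℝ → ℝ) (μ : ℝ) (hμ : 0 < μ)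
    (hsm : ContDiff ℝ (⊤ : ℕ∞) (Function.uncurry γ))
    (hreg : ∀ t x, px γ t x ≠ 0)
    (hV : ∀ t x, V t x =
      -2 * (dsR γ)^[2] (curv γ) t x - (curv γ t x) ^ 3 + μ * curv γ t x)
    (hvel : ∀ t x, pt γ t x = V t x • nor γ t x + Λ t x • tang γ t x)
    (hatt : ∀ t : ℝ, ∀ y ∈ ({0, 1} : Set ℝ), (pt γ t y).2 = 0)
    (hcurv : ∀ t : ℝ, ∀ y ∈ ({0, 1} : Set ℝ), curv γ t y = 0)
    (hthird : ∀ t : ℝ, ∀ y ∈ ({0, 1} : Set ℝ),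
      -2 * dsR γ (curv γ) t y * (nor γ t y).1 + μ * (tang γ t y).1 = 0) :
    ∀ t : ℝ, ∀ y ∈ ({0, 1} : Set ℝ),
      -2 * dsR γ (curv γ) t y * V t y + μ * Λ t y = 0 := by
  intro t y hy
  have hpx := hreg t y
  have hsp : speed γ t y ≠ 0 := norm_ne_zero_iff.mpr hpx
  have hτ : tang γ t y ≠ 0 := by
    unfold tang dsV
    exact smul_ne_zero (inv_ne_zero hsp) hpx
  set τ := tang γ t y with hτdef
  set a := -2 * dsR γ (curv γ) t y with hadef
  have hnor : nor γ t y = (-τ.2, τ.1) := rfl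
  have e1 : a * (-τ.2) + μ * τ.1 = 0 := by
    have h := hthird t y hy
    rw [hnor, ← hadef] at h
    simpa using h
  have e2 : V t y * τ.1 + Λ t y * τ.2 = 0 := by
    have h := hatt t y hy
    rw [hvel t y, hnor] at h
    simpa using h
  by_cases h2 : τ.2 = 0
  · exfalso
    apply hτ
    have h1 : τ.1 = 0 := by
      have : μ * τ.1 = 0 := by rw [h2] at e1; linarith
      exact (mul_eq_zero.mp this).resolve_left hμ.ne'
    exact Prod.ext h1 h2
  · have h1 : τ.1 = a * τ.2 / μ := by field_simp; linarith
    rw [h1] at e2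
    have : (a * V t y + μ * Λ t y) * τ.2 / μ = 0 := by field_simp at e2 ⊢; linarith
    have := mul_eq_zero.mp ((div_eq_zero_iff.mp this).resolve_right hμ.ne')
    rcases this with h | h
    · linarith
    · exact absurd h h2
end
end

section
/- For the linearized elastic system, the Lopatinskii–Shapiro condition holds at y = 0: for any λ ∈ ℂ with Re(λ) > 0, every solution γ ∈ C⁴([0,∞), ℂ²) of λγ + c⁻⁴ ∂_x⁴γ = 0 on [0,∞) (c = |∂_x γ₀| > 0 constant) with γ(0)_2 = 0, ∂_x²γ(0) = 0, ⟨∂_x³γ(0), ν₀⟩ν₀ having vanishing first component where (ν₀)_1 ≠ 0, and |γ(x)| → 0 as x → ∞, is identically zero. -/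
/-!
For a fourth root `μ` of `κ = -λc⁴`, the combination `Q_μ = γ''' + μγ'' + μ²γ' + μ³γ` satisfies
`Q_μ' = μ Q_μ` on `[0, ∞)`, so `Q_μ(x) = e^{μx} Q_μ(0)`. The roots are `±r, ±s` with `s = ±ir`
and `Re r, Re s > 0`, and `∑ μ Q_μ = 4κγ` writes `γ` as a combination of `e^{±rx}, e^{±sx}`.
Decay of `γ` forces the coefficients of the growing exponentials to vanish: `Q_r(0) = Q_s(0) = 0`.
With the boundary conditions these two vector equations kill `γ(0), γ'(0), γ''(0), γ'''(0)`,
hence every `Q_μ(0)`, hence `γ`.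
-/

open Filter

noncomputable section

open Complex Topology

variable {E : Type*} [NormedAddCommGroup E] [NormedSpace ℂ E]

lemma tendsto_cexp_mul_smul_atTop_zero {μ : ℂ} (hμ : μ.re < 0) (v : E) :
    Tendsto (fun x : ℝ => cexp (μ * x) • v) atTop (𝓝 0) := by
  have h : Tendsto (fun x : ℝ => cexp (μ * x)) atTop (𝓝 0) := by
    simpa [Complex.tendsto_exp_nhds_zero_iff] using tendsto_id.const_mul_atTop_of_neg hμ
  simpa using h.smul_const v

lemma norm_le_norm_cexp_mul_smul {a : ℂ} (ha : 0 ≤ a.re) {x : ℝ} (hx : 0 ≤ x) (w : E) :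
    ‖w‖ ≤ ‖cexp (a * x) • w‖ := by
  rw [norm_smul, Complex.norm_exp]
  refine le_mul_of_one_le_left (norm_nonneg w) (Real.one_le_exp ?_)
  simpa using mul_nonneg ha hx

lemma exists_cexp_mul_ne_one {d : ℂ} (hd : d ≠ 0) : ∃ t : ℝ, cexp (d * t) ≠ 1 := by
  by_contra! H
  have hder : HasDerivAt (fun t : ℝ => cexp (d * t)) d 0 := by
    simpa using (((hasDerivAt_id (0 : ℝ)).ofReal_comp).const_mul d).cexp
  rw [funext H] at hder
  exact hd (hder.unique (hasDerivAt_const 0 1))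

lemma eq_zero_of_tendsto_add_cexp_mul_smul {d : ℂ} (hd : 0 ≤ d.re) (hd0 : d ≠ 0) {u v : E}
    (h : Tendsto (fun x : ℝ => u + cexp (d * x) • v) atTop (𝓝 0)) : u = 0 ∧ v = 0 := by
  obtain ⟨t, ht⟩ := exists_cexp_mul_ne_one hd0
  -- shifting by `t` cancels `u` and multiplies the oscillating part by `e^{dt} - 1 ≠ 0`
  have hshift := ((h.comp (tendsto_atTop_add_const_right _ t tendsto_id)).sub h).norm
  have hw : ‖(cexp (d * t) - 1) • v‖ ≤ 0 := by
    refine ge_of_tendsto (by simpa using hshift) ?_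
    filter_upwards [eventually_ge_atTop 0] with x hx
    refine (norm_le_norm_cexp_mul_smul hd hx _).trans_eq (congrArg norm ?_)
    simp only [mul_add, Complex.exp_add]
    module
  have hv : v = 0 := by
    simpa [sub_eq_zero, ht] using norm_le_zero_iff.1 hw
  subst hv
  exact ⟨by simpa using h, rfl⟩

lemma eq_zero_of_tendsto_cexp_mul_smul_add {a b : ℂ} (ha : 0 ≤ a.re) (hb : 0 ≤ b.re)
    (hab : a ≠ b) {u v : E}
    (h : Tendsto (fun x : ℝ => cexp (a * x) • u + cexp (b * x) • v) atTop (𝓝 0)) :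
    u = 0 ∧ v = 0 := by
  wlog hba : 0 ≤ (b - a).re generalizing a b u v
  · refine (this hb ha hab.symm (by simpa only [add_comm] using h) ?_).symm
    simp only [sub_re] at hba ⊢
    linarith
  refine eq_zero_of_tendsto_add_cexp_mul_smul hba (sub_ne_zero.2 hab.symm)
    (squeeze_zero_norm' ?_ (tendsto_zero_iff_norm_tendsto_zero.1 h))
  filter_upwards [eventually_ge_atTop 0] with x hx
  refine (norm_le_norm_cexp_mul_smul ha hx _).trans_eq (congrArg norm ?_)
  rw [smul_add, smul_smul, ← Complex.exp_add]
  ring_nf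

lemma ContDiff.hasDerivAt_iteratedDeriv {𝕜 F : Type*} [NontriviallyNormedField 𝕜]
    [NormedAddCommGroup F] [NormedSpace 𝕜 F] {n : WithTop ℕ∞} {f : 𝕜 → F} (hf : ContDiff 𝕜 n f)
    {k : ℕ} (hk : (k : WithTop ℕ∞) < n) (x : 𝕜) :
    HasDerivAt (iteratedDeriv k f) (iteratedDeriv (k + 1) f x) x := by
  rw [iteratedDeriv_succ]
  exact (hf.differentiable_iteratedDeriv k hk x).hasDerivAt

lemma eq_cexp_mul_smul_of_hasDerivAt {g : ℝ → E} {μ : ℂ}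
    (hg : ∀ x ≥ 0, HasDerivAt g (μ • g x) x) {x : ℝ} (hx : 0 ≤ x) :
    g x = cexp (μ * x) • g 0 := by
  have hexp (y : ℝ) : HasDerivAt (fun y : ℝ => cexp (-μ * y)) (cexp (-μ * y) * -μ) y := by
    simpa using (((hasDerivAt_id y).ofReal_comp).const_mul (-μ)).cexp
  have hderiv (y : ℝ) (hy : 0 ≤ y) :
      HasDerivAt (fun y : ℝ => cexp (-μ * y) • g y) 0 y := by
    refine ((hexp y).smul (hg y hy)).congr_deriv ?_
    module
  have hconst := constant_of_has_deriv_right_zero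
    (fun y hy => (hderiv y hy.1).continuousAt.continuousWithinAt)
    (fun y hy => (hderiv y hy.1).hasDerivWithinAt) x ⟨hx, le_rfl⟩
  simp only [ofReal_zero, mul_zero, Complex.exp_zero, one_smul] at hconst
  rw [← hconst, smul_smul, ← Complex.exp_add]
  simp

/-- `(D⁴ - μ⁴) / (D - μ) = D³ + μ D² + μ² D + μ³`, applied to `f`. -/
def quarticCofactor (μ : ℂ) (f : ℝ → E) (x : ℝ) : E :=
  iteratedDeriv 3 f x + μ • iteratedDeriv 2 f x + μ ^ 2 • deriv f x + μ ^ 3 • f x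

lemma hasDerivAt_quarticCofactor {f : ℝ → E} (hf : ContDiff ℝ 4 f) (μ : ℂ) (x : ℝ) :
    HasDerivAt (quarticCofactor μ f)
      (iteratedDeriv 4 f x - μ ^ 4 • f x + μ • quarticCofactor μ f x) x := by
  have h0 := hf.hasDerivAt_iteratedDeriv (k := 0) (by norm_num) x
  have h1 := hf.hasDerivAt_iteratedDeriv (k := 1) (by norm_num) x
  have h2 := hf.hasDerivAt_iteratedDeriv (k := 2) (by norm_num) x
  have h3 := hf.hasDerivAt_iteratedDeriv (k := 3) (by norm_num) x
  rw [iteratedDeriv_zero] at h0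
  rw [iteratedDeriv_one] at h1
  refine (((h3.add (h2.const_smul μ)).add (h1.const_smul (μ ^ 2))).add
    (h0.const_smul (μ ^ 3))).congr_deriv ?_
  simp only [quarticCofactor, iteratedDeriv_one, Nat.reduceAdd]
  module

lemma quarticCofactor_eq_cexp_mul_smul {f : ℝ → E} (hf : ContDiff ℝ 4 f) {μ : ℂ}
    (hode : ∀ x ≥ 0, iteratedDeriv 4 f x = μ ^ 4 • f x) {x : ℝ} (hx : 0 ≤ x) :
    quarticCofactor μ f x = cexp (μ * x) • quarticCofactor μ f 0 :=
  eq_cexp_mul_smul_of_hasDerivAt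
    (fun y hy => by simpa [hode y hy] using hasDerivAt_quarticCofactor hf μ y) hx

lemma smul_eq_sum_quarticCofactor (f : ℝ → E) {r s : ℂ} (hsr : s ^ 2 = -r ^ 2) (x : ℝ) :
    (4 * r ^ 4) • f x = r • quarticCofactor r f x - r • quarticCofactor (-r) f x
      + s • quarticCofactor s f x - s • quarticCofactor (-s) f x := by
  simp only [quarticCofactor]
  linear_combination (norm := module)
    (-2 * hsr) • iteratedDeriv 2 f x + (-2 * (s ^ 2 - r ^ 2) * hsr) • f x

lemma ne_of_sq_eq_neg_sq {r s : ℂ} (hr : r ≠ 0) (hsr : s ^ 2 = -r ^ 2) : r ≠ s := by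
  rintro rfl
  exact hr (pow_eq_zero_iff two_ne_zero |>.1 (by linear_combination hsr / 2))

section QuarticODE

variable {f : ℝ → E} {r s : ℂ}

lemma smul_eq_sum_cexp_mul_smul (hf : ContDiff ℝ 4 f) (hsr : s ^ 2 = -r ^ 2)
    (hode : ∀ x ≥ 0, iteratedDeriv 4 f x = r ^ 4 • f x) {x : ℝ} (hx : 0 ≤ x) :
    (4 * r ^ 4) • f x = cexp (r * x) • r • quarticCofactor r f 0
      - cexp (-r * x) • r • quarticCofactor (-r) f 0
      + cexp (s * x) • s • quarticCofactor s f 0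
      - cexp (-s * x) • s • quarticCofactor (-s) f 0 := by
  have hroot (μ : ℂ) (hμ : μ ^ 4 = r ^ 4) :
      quarticCofactor μ f x = cexp (μ * x) • quarticCofactor μ f 0 :=
    quarticCofactor_eq_cexp_mul_smul hf (fun y hy => hμ ▸ hode y hy) hx
  have hs4 : s ^ 4 = r ^ 4 := by linear_combination (s ^ 2 - r ^ 2) * hsr
  rw [smul_eq_sum_quarticCofactor f hsr x, hroot r rfl, hroot (-r) (by ring), hroot s hs4,
    hroot (-s) (by rw [← hs4]; ring)]
  module

lemma quarticCofactor_eq_zero_of_tendsto (hf : ContDiff ℝ 4 f) (hr : 0 < r.re) (hs : 0 < s.re)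
    (hsr : s ^ 2 = -r ^ 2) (hode : ∀ x ≥ 0, iteratedDeriv 4 f x = r ^ 4 • f x)
    (hdecay : Tendsto f atTop (𝓝 0)) :
    quarticCofactor r f 0 = 0 ∧ quarticCofactor s f 0 = 0 := by
  have hr0 : r ≠ 0 := by rintro rfl; simp at hr
  have hs0 : s ≠ 0 := by rintro rfl; simp at hs
  have hlim : Tendsto (fun x : ℝ => cexp (r * x) • r • quarticCofactor r f 0
      + cexp (s * x) • s • quarticCofactor s f 0) atTop (𝓝 0) := by
    have h := ((hdecay.const_smul (4 * r ^ 4)).add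
      (tendsto_cexp_mul_smul_atTop_zero (μ := -r) (by simpa) (r • quarticCofactor (-r) f 0))).add
      (tendsto_cexp_mul_smul_atTop_zero (μ := -s) (by simpa) (s • quarticCofactor (-s) f 0))
    simp only [smul_zero, add_zero] at h
    refine h.congr' ?_
    filter_upwards [eventually_ge_atTop 0] with x hx
    rw [smul_eq_sum_cexp_mul_smul hf hsr hode hx]
    abel
  obtain ⟨hCr, hCs⟩ :=
    eq_zero_of_tendsto_cexp_mul_smul_add hr.le hs.le (ne_of_sq_eq_neg_sq hr0 hsr) hlim
  exact ⟨(smul_eq_zero.1 hCr).resolve_left hr0, (smul_eq_zero.1 hCs).resolve_left hs0⟩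

lemma eq_zero_of_initial_data_eq_zero (hf : ContDiff ℝ 4 f) (hr : r ≠ 0) (hsr : s ^ 2 = -r ^ 2)
    (hode : ∀ x ≥ 0, iteratedDeriv 4 f x = r ^ 4 • f x) (h0 : f 0 = 0) (h1 : deriv f 0 = 0)
    (h2 : iteratedDeriv 2 f 0 = 0) (h3 : iteratedDeriv 3 f 0 = 0) {x : ℝ} (hx : 0 ≤ x) :
    f x = 0 := by
  have hC (μ : ℂ) : quarticCofactor μ f 0 = 0 := by simp [quarticCofactor, h0, h1, h2, h3]
  have h := smul_eq_sum_cexp_mul_smul hf hsr hode hx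
  simp only [hC, smul_zero, sub_zero, add_zero] at h
  exact (smul_eq_zero.1 h).resolve_left (mul_ne_zero (by norm_num) (pow_ne_zero 4 hr))

end QuarticODE

lemma re_ne_zero_of_pow_four_eq {z κ : ℂ} (hκ : κ.re < 0) (hz : z ^ 4 = κ) : z.re ≠ 0 := by
  intro h
  obtain ⟨b, rfl⟩ : ∃ b : ℝ, z = b * I := ⟨z.im, by simpa [h] using (re_add_im z).symm⟩
  have hκ' : κ.re = b ^ 4 := by
    rw [← hz, mul_pow, I_pow_four, mul_one, ← ofReal_pow, ofReal_re]
  have : 0 ≤ b ^ 4 := by positivity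
  linarith

lemma exists_pow_four_eq_of_re_neg {κ : ℂ} (hκ : κ.re < 0) :
    ∃ r s : ℂ, r ^ 4 = κ ∧ s ^ 2 = -r ^ 2 ∧ 0 < r.re ∧ 0 < s.re := by
  obtain ⟨ρ, hρ⟩ := IsAlgClosed.exists_pow_nat_eq κ (n := 4) (by norm_num)
  have hIρ : (I * ρ) ^ 4 = κ := by rw [mul_pow, I_pow_four, one_mul, hρ]
  have hsign (z : ℂ) (hz : z.re ≠ 0) : ∃ w, (w = z ∨ w = -z) ∧ 0 < w.re := by
    rcases hz.lt_or_gt with h | h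
    · exact ⟨-z, Or.inr rfl, by simpa⟩
    · exact ⟨z, Or.inl rfl, h⟩
  obtain ⟨r, hr, hr_re⟩ := hsign ρ (re_ne_zero_of_pow_four_eq hκ hρ)
  obtain ⟨s, hs, hs_re⟩ := hsign (I * ρ) (re_ne_zero_of_pow_four_eq hκ hIρ)
  have hr2 : r ^ 2 = ρ ^ 2 := by rcases hr with rfl | rfl <;> ring
  have hs2 : s ^ 2 = -ρ ^ 2 := by rcases hs with rfl | rfl <;> linear_combination ρ ^ 2 * I_sq
  refine ⟨r, s, ?_, by rw [hs2, hr2], hr_re, hs_re⟩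
  rw [← hρ, show r ^ 4 = (r ^ 2) ^ 2 by ring, hr2]
  ring

lemma initial_data_eq_zero_of_boundary {γ : ℝ → ℂ × ℂ} {r s ν₁ ν₂ : ℂ} (hr : r ≠ 0)
    (hsr : s ^ 2 = -r ^ 2) (hν₁ : ν₁ ≠ 0)
    (hCr : quarticCofactor r γ 0 = 0) (hCs : quarticCofactor s γ 0 = 0)
    (hbc1 : (γ 0).2 = 0) (hbc2 : iteratedDeriv 2 γ 0 = 0)
    (hbc3 : ((iteratedDeriv 3 γ 0).1 * ν₁ + (iteratedDeriv 3 γ 0).2 * ν₂) * ν₁ = 0) :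
    γ 0 = 0 ∧ deriv γ 0 = 0 ∧ iteratedDeriv 3 γ 0 = 0 := by
  simp only [quarticCofactor, hbc2, smul_zero, add_zero, Prod.ext_iff, Prod.fst_add,
    Prod.snd_add, Prod.smul_fst, Prod.smul_snd, smul_eq_mul, Prod.fst_zero,
    Prod.snd_zero] at hCr hCs
  obtain ⟨hCr₁, hCr₂⟩ := hCr
  obtain ⟨hCs₁, hCs₂⟩ := hCs
  have hr2 : r ^ 2 ≠ 0 := pow_ne_zero 2 hr
  have hb₂ : (deriv γ 0).2 = 0 := by
    have h : (2 * r ^ 2) * (deriv γ 0).2 = 0 := by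
      linear_combination hCr₂ - hCs₂ - (r ^ 3 - s ^ 3) * hbc1 + (deriv γ 0).2 * hsr
    exact (mul_eq_zero.1 h).resolve_left (mul_ne_zero two_ne_zero hr2)
  have hc₂ : (iteratedDeriv 3 γ 0).2 = 0 := by
    linear_combination hCr₂ - r ^ 2 * hb₂ - r ^ 3 * hbc1
  have hc₁ : (iteratedDeriv 3 γ 0).1 = 0 := by
    have h : (iteratedDeriv 3 γ 0).1 * ν₁ ^ 2 = 0 := by
      linear_combination hbc3 - ν₂ * ν₁ * hc₂
    exact (mul_eq_zero.1 h).resolve_right (pow_ne_zero 2 hν₁)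
  have ha₁ : (γ 0).1 = 0 := by
    have h : (r ^ 2 * (r - s)) * (γ 0).1 = 0 := by
      linear_combination hCr₁ + hCs₁ - 2 * hc₁ - ((deriv γ 0).1 + s * (γ 0).1) * hsr
    exact (mul_eq_zero.1 h).resolve_left
      (mul_ne_zero hr2 (sub_ne_zero.2 (ne_of_sq_eq_neg_sq hr hsr)))
  have hb₁ : (deriv γ 0).1 = 0 := by
    have h : r ^ 2 * (deriv γ 0).1 = 0 := by
      linear_combination hCr₁ - hc₁ - r ^ 3 * ha₁
    exact (mul_eq_zero.1 h).resolve_left hr2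
  exact ⟨Prod.ext ha₁ hbc1, Prod.ext hb₁ hb₂, Prod.ext hc₁ hc₂⟩

theorem lopatinskii_shapiro_general
    (lam : ℂ) (hlam : 0 < lam.re) (c : ℝ) (hc : 0 < c)
    (ν₀ : ℝ × ℝ) (hν1 : ν₀.1 ≠ 0)
    (γ : ℝ → ℂ × ℂ) (hγ : ContDiff ℝ 4 γ)
    (hode : ∀ x ≥ (0:ℝ), lam • γ x + (((c:ℂ)) ^ 4)⁻¹ • iteratedDeriv 4 γ x = 0)
    (hbc1 : (γ 0).2 = 0)
    (hbc2 : iteratedDeriv 2 γ 0 = 0)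
    (hbc3 : (((iteratedDeriv 3 γ 0).1 * (ν₀.1 : ℂ)
        + (iteratedDeriv 3 γ 0).2 * (ν₀.2 : ℂ)) * (ν₀.1 : ℂ)) = 0)
    (hdecay : Tendsto (fun x => ‖γ x‖) atTop (nhds 0)) :
    ∀ x ≥ (0:ℝ), γ x = 0 := by
  have hc4 : (c : ℂ) ^ 4 ≠ 0 := pow_ne_zero 4 (ofReal_ne_zero.2 hc.ne')
  have hκ : (-(lam * (c : ℂ) ^ 4)).re < 0 := by
    rw [← ofReal_pow, neg_re, re_mul_ofReal, neg_lt_zero]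
    positivity
  obtain ⟨r, s, hr4, hsr, hr, hs⟩ := exists_pow_four_eq_of_re_neg hκ
  have hr0 : r ≠ 0 := by rintro rfl; simp at hr
  have hode' (x : ℝ) (hx : 0 ≤ x) : iteratedDeriv 4 γ x = r ^ 4 • γ x := by
    rw [← smul_inv_smul₀ hc4 (iteratedDeriv 4 γ x), eq_neg_of_add_eq_zero_right (hode x hx), hr4]
    module
  obtain ⟨hCr, hCs⟩ := quarticCofactor_eq_zero_of_tendsto hγ hr hs hsr hode'
    (tendsto_zero_iff_norm_tendsto_zero.2 hdecay)
  obtain ⟨h0, h1, h3⟩ := initial_data_eq_zero_of_boundary hr0 hsr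
    (ofReal_ne_zero.2 hν1) hCr hCs hbc1 hbc2 hbc3
  exact fun x hx => eq_zero_of_initial_data_eq_zero hγ hr0 hsr hode' h0 h1 hbc2 h3 hx

/-- the Lopatinskii–Shapiro condition holds at `y = 0` for the
linearized elastic system: every decaying solution of
`λγ + c⁻⁴ ∂_x⁴ γ = 0` with the stated boundary conditions vanishes. -/
theorem lopatinskii_shapiro
    (lam : ℂ) (hlam : 0 < lam.re) (c : ℝ) (hc : 0 < c)
    (ν₀ : ℝ × ℝ) (hν : ‖ν₀‖ = 1) (hν1 : ν₀.1 ≠ 0)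
    (γ : ℝ → ℂ × ℂ) (hγ : ContDiff ℝ 4 γ)
    (hode : ∀ x ≥ (0:ℝ), lam • γ x + (((c:ℂ)) ^ 4)⁻¹ • iteratedDeriv 4 γ x = 0)
    (hbc1 : (γ 0).2 = 0)
    (hbc2 : iteratedDeriv 2 γ 0 = 0)
    (hbc3 : (((iteratedDeriv 3 γ 0).1 * (ν₀.1 : ℂ)
        + (iteratedDeriv 3 γ 0).2 * (ν₀.2 : ℂ)) * (ν₀.1 : ℂ)) = 0)
    (hdecay : Tendsto (fun x => ‖γ x‖) atTop (nhds 0)) :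
    ∀ x ≥ (0:ℝ), γ x = 0 :=
  lopatinskii_shapiro_general lam hlam c hc ν₀ hν1 γ hγ hode hbc1 hbc2 hbc3 hdecay

end
end
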